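/- arXiv:2512.07822 — 3 statements merged into one kernel-verified Lean document; each statement's English description precedes it below -/
import Mathlib

section
/- Let Λ₁: L(H) → L(K₁) and Λ₂: L(H) → L(K₂) be quantum channels (completely positive trace-preserving linear maps) between operator spaces of finite-dimensional Hilbert spaces. Suppose there exists a minimal informationally complete POVM M̄₂ on K₂ and a POVM M̄₁ on K₁ with the same outcome set such that Tr[Λ₂(ρ) M̄₂(x)] = Tr[Λ₁(ρ) M̄₁(x)] for all operators ρ ∈ L(H) and all outcomes x. Then there exists a Hermitian-preserving trace-preserving linear map Θ: L(K₁) → L(K₂) with Λ₂ = Θ ∘ Λ₁. -/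
open ComplexOrder Matrix

/-- A POVM: a finite family of positive semidefinite operators summing to the
identity. -/
def IsPOVM {d k : ℕ} (M : Fin k → Matrix (Fin d) (Fin d) ℂ) : Prop :=
  (∀ x, (M x).PosSemidef) ∧ (∑ x, M x = 1)

/-- Hermitian-preserving linear map between matrix spaces. -/
def HermitianPreserving {m n : ℕ}
    (Φ : Matrix (Fin m) (Fin m) ℂ →ₗ[ℂ] Matrix (Fin n) (Fin n) ℂ) : Prop :=
  ∀ X, Φ Xᴴ = (Φ X)ᴴ

/-- Trace-preserving linear map between matrix spaces. -/
def TracePreserving {m n : ℕ}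
    (Φ : Matrix (Fin m) (Fin m) ℂ →ₗ[ℂ] Matrix (Fin n) (Fin n) ℂ) : Prop :=
  ∀ X, (Φ X).trace = X.trace

/-- Completely positive linear map: `Φ ⊗ id_k` maps positive semidefinite
matrices to positive semidefinite matrices, for every ancilla dimension `k`. -/
def CompletelyPositive {m n : ℕ}
    (Φ : Matrix (Fin m) (Fin m) ℂ →ₗ[ℂ] Matrix (Fin n) (Fin n) ℂ) : Prop :=
  ∀ (k : ℕ) (A : Matrix (Fin m × Fin k) (Fin m × Fin k) ℂ), A.PosSemidef →
    (Matrix.of fun (p q : Fin n × Fin k) =>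
      Φ (Matrix.of fun a b => A (a, p.2) (b, q.2)) p.1 q.1).PosSemidef

/-- A quantum channel: a completely positive trace-preserving linear map. -/
def IsChannel {m n : ℕ}
    (Φ : Matrix (Fin m) (Fin m) ℂ →ₗ[ℂ] Matrix (Fin n) (Fin n) ℂ) : Prop :=
  CompletelyPositive Φ ∧ TracePreserving Φ

/-- If `B` is Hermitian then `Tr[Aᴴ B] = star Tr[A B]`. -/
lemma trace_conjTranspose_mul_hermitian {n : ℕ} {A B : Matrix (Fin n) (Fin n) ℂ}
    (hB : B.IsHermitian) : (Aᴴ * B).trace = star ((A * B).trace) := by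
  conv_lhs => rw [← hB.eq]
  rw [← conjTranspose_mul, trace_conjTranspose, trace_mul_comm]

lemma trace_mul_conjTranspose_self_eq_zero {n : ℕ} {Z : Matrix (Fin n) (Fin n) ℂ}
    (hZ : (Z * Zᴴ).trace = 0) : Z = 0 := by
  have h : ∑ i, ∑ j, Complex.normSq (Z i j) = 0 := by
    have := congrArg Complex.re hZ
    simpa [Matrix.trace, Matrix.diag, Matrix.mul_apply, Complex.ext_iff,
      Matrix.conjTranspose_apply, Complex.mul_conj] using this
  ext i j
  have hterm : ∀ i ∈ Finset.univ, ∑ j, Complex.normSq (Z i j) = 0 := by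
    intro i _
    refine (Finset.sum_eq_zero_iff_of_nonneg ?_).mp h i (Finset.mem_univ i)
    intro i _
    exact Finset.sum_nonneg fun j _ => Complex.normSq_nonneg _
  have := (Finset.sum_eq_zero_iff_of_nonneg
    (fun j _ => Complex.normSq_nonneg (Z i j))).mp (hterm i (Finset.mem_univ i)) j
    (Finset.mem_univ j)
  simpa [Complex.normSq_eq_zero] using this

/-- if the output statistics of `Λ₁` under a POVM `M̄₁` reproduce
the statistics of `Λ₂` under a minimal informationally complete POVM `M̄₂`,
then `Λ₂ = Θ ∘ Λ₁` for some Hermitian-preserving trace-preserving map `Θ`. -/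
theorem asymp_implies_HP_postprocessing
    (h k₁ k₂ : ℕ) (hk₂ : 0 < k₂)
    (Λ₁ : Matrix (Fin h) (Fin h) ℂ →ₗ[ℂ] Matrix (Fin k₁) (Fin k₁) ℂ)
    (Λ₂ : Matrix (Fin h) (Fin h) ℂ →ₗ[ℂ] Matrix (Fin k₂) (Fin k₂) ℂ)
    (hΛ₁ : IsChannel Λ₁) (hΛ₂ : IsChannel Λ₂)
    (M₂ : Fin (k₂ ^ 2) → Matrix (Fin k₂) (Fin k₂) ℂ)
    (hM₂ : IsPOVM M₂) (hM₂li : LinearIndependent ℂ M₂)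
    (M₁ : Fin (k₂ ^ 2) → Matrix (Fin k₁) (Fin k₁) ℂ)
    (hM₁ : IsPOVM M₁)
    (hstat : ∀ (ρ : Matrix (Fin h) (Fin h) ℂ) (x : Fin (k₂ ^ 2)),
      (Λ₂ ρ * M₂ x).trace = (Λ₁ ρ * M₁ x).trace) :
    ∃ Θ : Matrix (Fin k₁) (Fin k₁) ℂ →ₗ[ℂ] Matrix (Fin k₂) (Fin k₂) ℂ,
      HermitianPreserving Θ ∧ TracePreserving Θ ∧ ∀ ρ, Λ₂ ρ = Θ (Λ₁ ρ) := by
  classical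
  -- the trace-pairing map against M₂
  let T : Matrix (Fin k₂) (Fin k₂) ℂ →ₗ[ℂ] (Fin (k₂ ^ 2) → ℂ) :=
    LinearMap.pi fun y =>
      (Matrix.traceLinearMap (Fin k₂) ℂ ℂ).comp (LinearMap.mulRight ℂ (M₂ y))
  have hT : ∀ Z y, T Z y = (Z * M₂ y).trace := fun Z y => rfl
  -- the trace-pairing map against M₁
  let S : Matrix (Fin k₁) (Fin k₁) ℂ →ₗ[ℂ] (Fin (k₂ ^ 2) → ℂ) :=
    LinearMap.pi fun y =>
      (Matrix.traceLinearMap (Fin k₁) ℂ ℂ).comp (LinearMap.mulRight ℂ (M₁ y))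
  have hS : ∀ Z y, S Z y = (Z * M₁ y).trace := fun Z y => rfl
  -- M₂ is a basis
  have hcard : Fintype.card (Fin (k₂ ^ 2)) =
      Module.finrank ℂ (Matrix (Fin k₂) (Fin k₂) ℂ) := by
    simp [Module.finrank_matrix, sq]
  haveI : Nonempty (Fin (k₂ ^ 2)) := ⟨⟨0, by positivity⟩⟩
  let b := basisOfLinearIndependentOfCardEqFinrank hM₂li hcard
  have hb : ∀ y, b y = M₂ y := fun y =>
    congrFun (coe_basisOfLinearIndependentOfCardEqFinrank hM₂li hcard) y
  -- T is injective
  have hinj : Function.Injective T := by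
    rw [← LinearMap.ker_eq_bot, LinearMap.ker_eq_bot']
    intro Z hZ
    have h0 : ∀ A : Matrix (Fin k₂) (Fin k₂) ℂ, (Z * A).trace = 0 := by
      intro A
      have hA : A = ∑ y, b.repr A y • M₂ y := by
        conv_lhs => rw [← b.sum_repr A]
        simp [hb]
      rw [hA, Finset.mul_sum, trace_sum]
      refine Finset.sum_eq_zero fun y _ => ?_
      have : (Z * M₂ y).trace = 0 := by
        have := congrFun hZ y; simpa [hT] using this
      rw [Matrix.mul_smul, trace_smul, this, smul_zero]
    exact trace_mul_conjTranspose_self_eq_zero (h0 Zᴴ)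
  have hdim : Module.finrank ℂ (Matrix (Fin k₂) (Fin k₂) ℂ) =
      Module.finrank ℂ (Fin (k₂ ^ 2) → ℂ) := by
    simp [Module.finrank_matrix, sq]
  let E := LinearMap.linearEquivOfInjective T hinj hdim
  have hE : ∀ Z, E Z = T Z := fun Z => rfl
  refine ⟨E.symm.toLinearMap.comp S, ?_, ?_, ?_⟩
  · -- Hermitian preserving
    intro X
    apply hinj
    have h1 : T ((E.symm.toLinearMap.comp S) Xᴴ) = S Xᴴ := by
      have := E.apply_symm_apply (S Xᴴ); simpa [hE] using this
    have h2 : T ((E.symm.toLinearMap.comp S) X) = S X := by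
      have := E.apply_symm_apply (S X); simpa [hE] using this
    rw [h1]
    funext y
    rw [hS, hT]
    rw [trace_conjTranspose_mul_hermitian (hM₁.1 y).isHermitian,
      trace_conjTranspose_mul_hermitian (hM₂.1 y).isHermitian]
    congr 1
    have := congrFun h2 y
    rw [hT, hS] at this
    exact this.symm
  · -- trace preserving
    intro X
    have h2 : T ((E.symm.toLinearMap.comp S) X) = S X := by
      have := E.apply_symm_apply (S X); simpa [hE] using this
    have hid₂ : (∑ y, M₂ y) = 1 := hM₂.2
    have hid₁ : (∑ y, M₁ y) = 1 := hM₁.2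
    calc ((E.symm.toLinearMap.comp S) X).trace
        = ((E.symm.toLinearMap.comp S) X * ∑ y, M₂ y).trace := by rw [hid₂, mul_one]
      _ = ∑ y, ((E.symm.toLinearMap.comp S) X * M₂ y).trace := by
          rw [Finset.mul_sum, trace_sum]
      _ = ∑ y, (X * M₁ y).trace := by
          refine Finset.sum_congr rfl fun y _ => ?_
          have := congrFun h2 y
          rw [hT, hS] at this
          exact this
      _ = (X * ∑ y, M₁ y).trace := by rw [Finset.mul_sum, trace_sum]
      _ = X.trace := by rw [hid₁, mul_one]
  · -- factorization
    intro ρ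
    apply hinj
    have h2 : T ((E.symm.toLinearMap.comp S) (Λ₁ ρ)) = S (Λ₁ ρ) := by
      have := E.apply_symm_apply (S (Λ₁ ρ)); simpa [hE] using this
    rw [h2]
    funext y
    rw [hT, hS]
    exact hstat ρ y
end

section
/- Let Λ₁: L(H) → L(K₁) and Λ₂: L(H) → L(K₂) be quantum channels, and suppose Λ₂ = Θ ∘ Λ₁ for some Hermitian-preserving trace-preserving linear map Θ: L(K₁) → L(K₂). Then there exist a minimal informationally complete POVM M₂ on K₂ and a POVM M₁ on K₁ with the same outcome set of size (dim K₂)^2 such that Tr[Λ₂(ρ) M₂(x)] = Tr[Λ₁(ρ) M₁(x)] for all ρ ∈ L(H) and all x. -/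
open ComplexOrder Matrix

section ICPOVMHelpers

lemma exists_shift {n : ℕ} {H : Matrix (Fin n) (Fin n) ℂ} (hH : H.IsHermitian) :
    ∃ c : ℝ, 0 ≤ c ∧ (H + (c : ℂ) • 1).PosSemidef := by
  refine ⟨∑ i, |hH.eigenvalues i|, Finset.sum_nonneg fun i _ => abs_nonneg _, ?_⟩
  set c : ℝ := ∑ i, |hH.eigenvalues i| with hc
  have key : H + (c : ℂ) • 1 =
      (hH.eigenvectorUnitary : Matrix (Fin n) (Fin n) ℂ) *
        diagonal (fun i => ((hH.eigenvalues i + c : ℝ) : ℂ)) *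
        (star hH.eigenvectorUnitary : Matrix (Fin n) (Fin n) ℂ) := by
    have hdiag : diagonal (fun i => ((hH.eigenvalues i + c : ℝ) : ℂ)) =
        diagonal (RCLike.ofReal ∘ hH.eigenvalues) + (c : ℂ) • 1 := by
      ext i j
      by_cases hij : i = j <;>
        simp [hij, diagonal, Matrix.one_apply, RCLike.ofReal]

    rw [hdiag, mul_add, add_mul, ← Unitary.conjStarAlgAut_apply (S := ℂ) (u := hH.eigenvectorUnitary)
      (x := diagonal (RCLike.ofReal ∘ hH.eigenvalues)), ← hH.spectral_theorem]
    congr 1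
    rw [Matrix.mul_smul, Matrix.smul_mul, mul_one,
      (Matrix.mem_unitaryGroup_iff).mp hH.eigenvectorUnitary.2]
  rw [key]
  refine Matrix.PosSemidef.mul_mul_conjTranspose_same ?_ _
  refine posSemidef_diagonal_iff.mpr fun i => ?_
  rw [Complex.zero_le_real]
  have h1 : |hH.eigenvalues i| ≤ c :=
    Finset.single_le_sum (f := fun j => |hH.eigenvalues j|)
      (fun j _ => abs_nonneg _) (Finset.mem_univ i)
  linarith [neg_abs_le (hH.eigenvalues i)]

variable {k : ℕ}

noncomputable def icVec (p : Fin k × Fin k) : Fin k → ℂ := fun a =>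
  if a = p.1 then 1 else if a = p.2 then (if p.1 < p.2 then 1 else Complex.I) else 0

noncomputable def icMat (p : Fin k × Fin k) : Matrix (Fin k) (Fin k) ℂ :=
  vecMulVec (icVec p) (star (icVec p))

lemma icMat_apply (p : Fin k × Fin k) (a b : Fin k) :
    icMat p a b = icVec p a * star (icVec p b) := by
  simp [icMat, vecMulVec_apply]

lemma icVec_supp (p : Fin k × Fin k) (x : Fin k) (h1 : x ≠ p.1) (h2 : x ≠ p.2) :
    icVec p x = 0 := by simp [icVec, h1, h2]

lemma icVec_fst (p : Fin k × Fin k) : icVec p p.1 = 1 := by simp [icVec]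

lemma icVec_snd_lt {i j : Fin k} (h : i < j) : icVec (i, j) j = 1 := by
  simp [icVec, h, ne_of_gt h]

lemma icVec_snd_gt {i j : Fin k} (h : j < i) : icVec (i, j) j = Complex.I := by
  simp [icVec, ne_of_lt h, not_lt_of_gt h]

lemma icMat_posSemidef (p : Fin k × Fin k) : (icMat p).PosSemidef := by
  refine Matrix.PosSemidef.of_dotProduct_mulVec_nonneg ?_ ?_
  · ext a b
    simp [icMat, vecMulVec_apply, conjTranspose_apply, mul_comm]
  · intro x
    have hmv : (icMat p) *ᵥ x = (star (icVec p) ⬝ᵥ x) • icVec p := by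
      ext a
      simp [icMat, mulVec, dotProduct, vecMulVec_apply, Finset.mul_sum, mul_comm, mul_left_comm]
    rw [hmv, dotProduct_smul]
    have h2 : star x ⬝ᵥ icVec p = star (star (icVec p) ⬝ᵥ x) := by
      simp [dotProduct, mul_comm, star_sum]
    rw [h2, smul_eq_mul, mul_comm]
    exact star_mul_self_nonneg _

lemma icMat_diag_sum : ∑ i : Fin k, icMat (i, i) = (1 : Matrix (Fin k) (Fin k) ℂ) := by
  ext a b
  rw [Matrix.sum_apply]
  by_cases hab : a = b
  · subst hab
    rw [Finset.sum_eq_single a]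
    · simp [icMat_apply, icVec, Matrix.one_apply]
    · intro i _ hi
      simp [icMat_apply, icVec_supp (i, i) a (Ne.symm hi) (Ne.symm hi)]
    · simp
  · rw [Finset.sum_eq_zero, Matrix.one_apply_ne hab]
    intro i _
    rcases ne_or_eq a i with hai | rfl
    · simp [icMat_apply, icVec_supp (i, i) a hai hai]
    · simp [icMat_apply, icVec_supp (a, a) b (Ne.symm hab) (Ne.symm hab)]

lemma icMat_offdiag_zero {p : Fin k × Fin k} {a b : Fin k} (hab : a ≠ b)
    (h1 : p ≠ (a, b)) (h2 : p ≠ (b, a)) : icMat p a b = 0 := by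
  rw [icMat_apply]
  rcases ne_or_eq a p.1 with ha1 | ha1
  · rcases ne_or_eq a p.2 with ha2 | ha2
    · rw [icVec_supp p a ha1 ha2, zero_mul]
    · -- a = p.2
      rcases ne_or_eq b p.1 with hb1 | hb1
      · rcases ne_or_eq b p.2 with hb2 | hb2
        · rw [icVec_supp p b hb1 hb2, star_zero, mul_zero]
        · exact absurd (ha2.trans hb2.symm) hab
      · exact absurd (Prod.ext hb1.symm ha2.symm) h2
  · -- a = p.1
    rcases ne_or_eq b p.2 with hb2 | hb2
    · rcases ne_or_eq b p.1 with hb1 | hb1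
      · rw [icVec_supp p b hb1 hb2, star_zero, mul_zero]
      · exact absurd (ha1.trans hb1.symm) hab
    · exact absurd (Prod.ext ha1.symm hb2.symm) h1

lemma icMat_linearIndependent :
    LinearIndependent ℂ (icMat : Fin k × Fin k → Matrix (Fin k) (Fin k) ℂ) := by
  rw [Fintype.linearIndependent_iff]
  intro g hg
  have hent : ∀ a b : Fin k, ∑ p : Fin k × Fin k, g p * icMat p a b = 0 := by
    intro a b
    have h1 : (∑ p : Fin k × Fin k, g p • icMat p) a b = 0 := by rw [hg]; rfl
    rw [Matrix.sum_apply] at h1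
    simpa using h1
  have hoff : ∀ a b : Fin k, a < b → g (a, b) = 0 ∧ g (b, a) = 0 := by
    intro a b hab
    have hne : a ≠ b := ne_of_lt hab
    have hpair : ((a, b) : Fin k × Fin k) ≠ (b, a) := by
      intro hcon
      exact hne (congrArg Prod.fst hcon)
    have key : ∀ x y : Fin k, x = a ∨ x = b → y = a ∨ y = b → x ≠ y →
        g (a, b) * icMat (a, b) x y + g (b, a) * icMat (b, a) x y = 0 := by
      intro x y hx hy hxy
      have hsum := hent x y
      rw [← Finset.sum_subset (Finset.subset_univ ({((a, b) : Fin k × Fin k), (b, a)} : Finset _))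
        (fun p _ hp => ?_)] at hsum
      · rwa [Finset.sum_pair hpair] at hsum
      · simp only [Finset.mem_insert, Finset.mem_singleton, not_or] at hp
        have hmem : ((x, y) : Fin k × Fin k) = (a, b) ∨ ((x, y) : Fin k × Fin k) = (b, a) := by
          rcases hx with rfl | rfl <;> rcases hy with rfl | rfl <;> simp_all
        rcases hmem with hm | hm
        · obtain ⟨rfl, rfl⟩ := Prod.mk.inj hm
          rw [icMat_offdiag_zero hxy hp.1 hp.2, mul_zero]
        · obtain ⟨rfl, rfl⟩ := Prod.mk.inj hm
          rw [icMat_offdiag_zero hxy hp.2 hp.1, mul_zero]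
    have e1 := key a b (Or.inl rfl) (Or.inr rfl) hne
    have e2 := key b a (Or.inr rfl) (Or.inl rfl) hne.symm
    rw [icMat_apply, icMat_apply, icVec_fst (a, b), icVec_snd_lt hab,
      icVec_snd_gt hab, icVec_fst (b, a)] at e1
    rw [icMat_apply, icMat_apply, icVec_fst (a, b), icVec_snd_lt hab,
      icVec_snd_gt hab, icVec_fst (b, a)] at e2
    simp only [star_one, mul_one, one_mul, Complex.star_def, Complex.conj_I] at e1 e2
    constructor
    · have : g (a, b) * 2 = 0 := by linear_combination e1 + e2
      simpa using this
    · have : g (b, a) * (2 * Complex.I) = 0 := by linear_combination e1 - e2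
      rcases mul_eq_zero.mp this with h | h
      · exact h
      · exact absurd h (by simp [Complex.I_ne_zero])
  intro p
  rcases lt_trichotomy p.1 p.2 with hlt | heq | hgt
  · have := (hoff p.1 p.2 hlt).1; simpa using this
  · have hd := hent p.1 p.1
    rw [Finset.sum_eq_single p] at hd
    · rw [icMat_apply, icVec_fst] at hd
      simpa using hd
    · intro q _ hq
      rcases lt_trichotomy q.1 q.2 with h1 | h1 | h1
      · have h0 := (hoff q.1 q.2 h1).1
        rw [Prod.mk.eta] at h0
        rw [h0, zero_mul]
      · have hq1 : p.1 ≠ q.1 := by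
          intro hcon
          exact hq (Prod.ext hcon.symm (by rw [← h1, ← hcon]; exact heq))
        rw [icMat_apply, icVec_supp q p.1 hq1 (h1 ▸ hq1), zero_mul, mul_zero]
      · have h0 := (hoff q.2 q.1 h1).2
        rw [Prod.mk.eta] at h0
        rw [h0, zero_mul]
    · simp
  · have := (hoff p.2 p.1 hgt).2; simpa using this

lemma psd_real_smul {n : ℕ} {M : Matrix (Fin n) (Fin n) ℂ} (hM : M.PosSemidef)
    {c : ℝ} (hc : 0 ≤ c) : ((c : ℂ) • M).PosSemidef := by
  refine Matrix.PosSemidef.of_dotProduct_mulVec_nonneg ?_ ?_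
  · unfold Matrix.IsHermitian
    rw [conjTranspose_smul, hM.1]
    congr 1
    simp [Complex.star_def]
  · intro x
    rw [smul_mulVec, dotProduct_smul, smul_eq_mul]
    refine mul_nonneg ?_ (hM.dotProduct_mulVec_nonneg x)
    rw [Complex.zero_le_real]
    exact hc

variable {k₁ k₂ : ℕ}

noncomputable def dualMap (Θ : Matrix (Fin k₁) (Fin k₁) ℂ →ₗ[ℂ] Matrix (Fin k₂) (Fin k₂) ℂ)
    (Y : Matrix (Fin k₂) (Fin k₂) ℂ) : Matrix (Fin k₁) (Fin k₁) ℂ :=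
  Matrix.of fun b a => (Θ (Matrix.single a b 1) * Y).trace

lemma dualMap_pairing (Θ : Matrix (Fin k₁) (Fin k₁) ℂ →ₗ[ℂ] Matrix (Fin k₂) (Fin k₂) ℂ)
    (X : Matrix (Fin k₁) (Fin k₁) ℂ) (Y : Matrix (Fin k₂) (Fin k₂) ℂ) :
    (Θ X * Y).trace = (X * dualMap Θ Y).trace := by
  have hX : X = ∑ a : Fin k₁, ∑ b : Fin k₁, (X a b) • Matrix.single a b (1 : ℂ) := by
    conv_lhs => rw [matrix_eq_sum_single X]
    refine Finset.sum_congr rfl fun a _ => Finset.sum_congr rfl fun b _ => ?_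
    rw [smul_single, smul_eq_mul, mul_one]
  conv_lhs => rw [hX]
  rw [map_sum, Finset.sum_mul, trace_sum]
  have hR : (X * dualMap Θ Y).trace
      = ∑ a : Fin k₁, ∑ b : Fin k₁, X a b * (Θ (Matrix.single a b 1) * Y).trace := by
    rw [Matrix.trace]
    simp only [Matrix.diag_apply, Matrix.mul_apply, dualMap, Matrix.of_apply]
  rw [hR]
  refine Finset.sum_congr rfl fun a _ => ?_
  rw [map_sum, Finset.sum_mul, trace_sum]
  refine Finset.sum_congr rfl fun b _ => ?_
  rw [_root_.map_smul, Matrix.smul_mul, trace_smul, smul_eq_mul]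

lemma dualMap_isHermitian (Θ : Matrix (Fin k₁) (Fin k₁) ℂ →ₗ[ℂ] Matrix (Fin k₂) (Fin k₂) ℂ)
    (hΘH : ∀ X, Θ Xᴴ = (Θ X)ᴴ) {Y : Matrix (Fin k₂) (Fin k₂) ℂ} (hY : Y.IsHermitian) :
    (dualMap Θ Y).IsHermitian := by
  ext a b
  rw [conjTranspose_apply]
  show star ((Θ (Matrix.single a b 1) * Y).trace) = (Θ (Matrix.single b a 1) * Y).trace
  have h1 : (Matrix.single a b (1:ℂ))ᴴ = Matrix.single b a (1:ℂ) := by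
    ext i j
    simp [conjTranspose_apply, Matrix.single, and_comm]
  calc star (Θ (Matrix.single a b 1) * Y).trace
      = ((Θ (Matrix.single a b 1) * Y)ᴴ).trace := by rw [trace_conjTranspose]
    _ = (Yᴴ * (Θ (Matrix.single a b 1))ᴴ).trace := by rw [conjTranspose_mul]
    _ = (Y * Θ (Matrix.single b a 1)).trace := by rw [hY.eq, ← hΘH, h1]
    _ = (Θ (Matrix.single b a 1) * Y).trace := trace_mul_comm _ _

lemma dualMap_one (Θ : Matrix (Fin k₁) (Fin k₁) ℂ →ₗ[ℂ] Matrix (Fin k₂) (Fin k₂) ℂ)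
    (hΘT : ∀ X, (Θ X).trace = X.trace) :
    dualMap Θ 1 = 1 := by
  ext a b
  show (Θ (Matrix.single b a 1) * 1).trace = (1 : Matrix (Fin k₁) (Fin k₁) ℂ) a b
  rw [mul_one, hΘT]
  by_cases hab : a = b
  · subst hab; simp [Matrix.one_apply]
  · rw [trace_single_eq_of_ne b a _ (Ne.symm hab), Matrix.one_apply_ne hab]

lemma dualMap_sum (Θ : Matrix (Fin k₁) (Fin k₁) ℂ →ₗ[ℂ] Matrix (Fin k₂) (Fin k₂) ℂ)
    {ι : Type*} (s : Finset ι) (f : ι → Matrix (Fin k₂) (Fin k₂) ℂ) :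
    dualMap Θ (∑ i ∈ s, f i) = ∑ i ∈ s, dualMap Θ (f i) := by
  ext a b
  rw [Matrix.sum_apply]
  show (Θ (Matrix.single b a 1) * (∑ i ∈ s, f i)).trace
    = ∑ i ∈ s, (Θ (Matrix.single b a 1) * f i).trace
  rw [Finset.mul_sum, trace_sum]

lemma exists_ic_povm (k : ℕ) (hk : 0 < k) :
    ∃ N : Fin k × Fin k → Matrix (Fin k) (Fin k) ℂ,
      (∀ p, (N p).PosSemidef) ∧ (∑ p, N p = 1) ∧ LinearIndependent ℂ N := by
  classical
  set S : Matrix (Fin k) (Fin k) ℂ := ∑ p : Fin k × Fin k, icMat p with hS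
  have hSherm : (-S).IsHermitian := by
    refine Matrix.IsHermitian.neg ?_
    unfold Matrix.IsHermitian
    rw [hS, conjTranspose_sum]
    exact Finset.sum_congr rfl fun p _ => (icMat_posSemidef p).1
  obtain ⟨c, hc0, hcpsd⟩ := exists_shift hSherm
  set ε : ℝ := 1 / (c + 1) with hε
  have hcpos : (0:ℝ) < c + 1 := by linarith
  have hεpos : 0 < ε := by positivity
  set p₀ : Fin k × Fin k := (⟨0, hk⟩, ⟨0, hk⟩) with hp₀
  set Z : Matrix (Fin k) (Fin k) ℂ := 1 - (ε : ℂ) • S with hZ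
  set N : Fin k × Fin k → Matrix (Fin k) (Fin k) ℂ :=
    fun p => (ε : ℂ) • icMat p + if p = p₀ then Z else 0 with hN
  have hce : (ε : ℂ) * ((c : ℂ) + 1) = 1 := by
    have hr : ε * (c + 1) = 1 := by
      rw [hε]; field_simp
    exact_mod_cast congrArg Complex.ofReal hr
  have hZpsd : Z.PosSemidef := by
    have h1 : Z = (ε : ℂ) • (((c : ℂ) + 1) • 1 - S) := by
      rw [hZ, smul_sub, smul_smul, hce, one_smul]
    have h2 : (((c : ℂ) + 1) • (1 : Matrix (Fin k) (Fin k) ℂ) - S) = (-S + (c : ℂ) • 1) + 1 := by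
      rw [add_smul, one_smul]; abel
    rw [h1, h2]
    exact psd_real_smul (hcpsd.add Matrix.PosSemidef.one) hεpos.le
  refine ⟨N, fun p => ?_, ?_, ?_⟩
  · -- PSD
    rw [hN]
    by_cases hp : p = p₀
    · simp only [hp, if_pos rfl]
      exact (psd_real_smul (icMat_posSemidef p₀) hεpos.le).add hZpsd
    · simp only [if_neg hp, add_zero]
      exact psd_real_smul (icMat_posSemidef p) hεpos.le
  · -- sum = 1
    rw [hN]
    rw [Finset.sum_add_distrib, ← Finset.smul_sum, ← hS,
      Finset.sum_ite_eq' Finset.univ p₀ (fun _ => Z), if_pos (Finset.mem_univ p₀), hZ]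
    abel
  · -- linear independence
    rw [Fintype.linearIndependent_iff]
    intro g hg
    -- rewrite the combination in terms of icMat
    have hZspan : Z = ∑ p : Fin k × Fin k,
        ((if p.1 = p.2 then (1:ℂ) else 0) - (ε : ℂ)) • icMat p := by
      have hdiag : ∑ p : Fin k × Fin k, (if p.1 = p.2 then (1:ℂ) else 0) • icMat p
          = (1 : Matrix (Fin k) (Fin k) ℂ) := by
        rw [← icMat_diag_sum, Fintype.sum_prod_type]
        refine Finset.sum_congr rfl fun i _ => ?_
        rw [Finset.sum_eq_single i]
        · simp
        · intro j _ hj; simp [Ne.symm hj]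
        · simp
      calc Z = ∑ p : Fin k × Fin k, (if p.1 = p.2 then (1:ℂ) else 0) • icMat p
            - ∑ p : Fin k × Fin k, (ε : ℂ) • icMat p := by
              rw [hdiag, ← Finset.smul_sum, ← hS, hZ]
        _ = _ := by rw [← Finset.sum_sub_distrib]
                    exact Finset.sum_congr rfl fun p _ => (sub_smul _ _ _).symm
    have hcomb : ∑ p : Fin k × Fin k,
        (g p * (ε : ℂ) + g p₀ * ((if p.1 = p.2 then (1:ℂ) else 0) - (ε : ℂ))) • icMat p = 0 := by
      rw [← hg, hN]
      have hsplit : ∀ p : Fin k × Fin k,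
          (g p * (ε : ℂ) + g p₀ * ((if p.1 = p.2 then (1:ℂ) else 0) - (ε : ℂ))) • icMat p
          = (g p * (ε : ℂ)) • icMat p
            + (g p₀ * ((if p.1 = p.2 then (1:ℂ) else 0) - (ε : ℂ))) • icMat p :=
        fun p => add_smul _ _ _
      rw [Finset.sum_congr rfl (fun p _ => hsplit p), Finset.sum_add_distrib]
      simp only [smul_add]
      rw [Finset.sum_add_distrib]
      congr 1
      · exact Finset.sum_congr rfl fun p _ => by rw [smul_smul]
      · have hone : ∀ p : Fin k × Fin k, g p • (if p = p₀ then Z else 0)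
            = if p = p₀ then g p₀ • Z else 0 := by
          intro p
          by_cases hp : p = p₀ <;> simp [hp]
        rw [Finset.sum_congr rfl (fun p _ => hone p),
          Finset.sum_ite_eq' Finset.univ p₀ (fun _ => g p₀ • Z), if_pos (Finset.mem_univ p₀),
          hZspan, Finset.smul_sum]
        exact Finset.sum_congr rfl fun p _ => by rw [smul_smul]
    have hcoef := Fintype.linearIndependent_iff.mp icMat_linearIndependent _ hcomb
    have hg0 : g p₀ = 0 := by
      have := hcoef p₀
      rw [if_pos rfl] at this
      have : g p₀ * (ε : ℂ) + g p₀ * (1 - (ε : ℂ)) = 0 := by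
        simpa [hp₀] using this
      have h2 : g p₀ = 0 := by linear_combination this
      exact h2
    intro p
    have := hcoef p
    rw [hg0, zero_mul, add_zero] at this
    have hεne : (ε : ℂ) ≠ 0 := by
      simpa using ne_of_gt hεpos
    exact (mul_eq_zero.mp this).resolve_right hεne

end ICPOVMHelpers

/-- if `Λ₂ = Θ ∘ Λ₁` for a Hermitian-preserving trace-preserving
map `Θ`, then there are a minimal informationally complete POVM `M₂` on the
output of `Λ₂` and a POVM `M₁` on the output of `Λ₁` with the same outcome set
reproducing the statistics. -/
theorem HP_postprocessing_implies_asymp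
    (h k₁ k₂ : ℕ) (hk₂ : 0 < k₂)
    (Λ₁ : Matrix (Fin h) (Fin h) ℂ →ₗ[ℂ] Matrix (Fin k₁) (Fin k₁) ℂ)
    (Λ₂ : Matrix (Fin h) (Fin h) ℂ →ₗ[ℂ] Matrix (Fin k₂) (Fin k₂) ℂ)
    (hΛ₁ : IsChannel Λ₁) (hΛ₂ : IsChannel Λ₂)
    (Θ : Matrix (Fin k₁) (Fin k₁) ℂ →ₗ[ℂ] Matrix (Fin k₂) (Fin k₂) ℂ)
    (hΘH : HermitianPreserving Θ) (hΘT : TracePreserving Θ)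
    (hcomp : ∀ ρ, Λ₂ ρ = Θ (Λ₁ ρ)) :
    ∃ (M₂ : Fin (k₂ ^ 2) → Matrix (Fin k₂) (Fin k₂) ℂ)
      (M₁ : Fin (k₂ ^ 2) → Matrix (Fin k₁) (Fin k₁) ℂ),
      IsPOVM M₂ ∧ LinearIndependent ℂ M₂ ∧ IsPOVM M₁ ∧
      ∀ (ρ : Matrix (Fin h) (Fin h) ℂ) (x : Fin (k₂ ^ 2)),
        (Λ₂ ρ * M₂ x).trace = (Λ₁ ρ * M₁ x).trace := by
  classical
  have hΛ₁T : ∀ X, (Λ₁ X).trace = X.trace := hΛ₁.2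
  have hΛ₂T : ∀ X, (Λ₂ X).trace = X.trace := hΛ₂.2
  have hΘH' : ∀ X, Θ Xᴴ = (Θ X)ᴴ := hΘH
  have hΘT' : ∀ X, (Θ X).trace = X.trace := hΘT

  classical
  obtain ⟨N, hNpsd, hNsum, hNli⟩ := exists_ic_povm k₂ hk₂
  set F : Fin k₂ × Fin k₂ → Matrix (Fin k₁) (Fin k₁) ℂ := fun p => dualMap Θ (N p) with hF
  have hFherm : ∀ p, (F p).IsHermitian := fun p => dualMap_isHermitian Θ hΘH (hNpsd p).1
  have hFsum : ∑ p, F p = 1 := by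
    rw [hF, ← dualMap_sum, hNsum, dualMap_one Θ hΘT]
  choose cf hcf0 hcfpsd using fun p => exists_shift (hFherm p)
  set t : ℝ := ∑ p, cf p with ht
  have ht0 : 0 ≤ t := Finset.sum_nonneg fun p _ => hcf0 p
  have hFt : ∀ p, (F p + (t : ℂ) • 1).PosSemidef := by
    intro p
    have hsplit : F p + (t : ℂ) • 1
        = (F p + (cf p : ℂ) • 1) + ((t - cf p : ℝ) : ℂ) • 1 := by
      push_cast
      rw [add_assoc, ← add_smul]
      ring_nf
    rw [hsplit]
    refine (hcfpsd p).add (psd_real_smul Matrix.PosSemidef.one ?_)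
    have : cf p ≤ t := Finset.single_le_sum (f := cf) (fun q _ => hcf0 q) (Finset.mem_univ p)
    linarith
  set s : ℝ := 1 / (1 + (k₂ ^ 2 : ℝ) * t) with hs
  have hden : (0:ℝ) < 1 + (k₂ ^ 2 : ℝ) * t := by positivity
  have hspos : 0 < s := by positivity
  have hst : (s : ℂ) * (1 + (k₂ ^ 2 : ℝ) * t) = 1 := by
    have hr : s * (1 + (k₂ ^ 2 : ℝ) * t) = 1 := by
      rw [hs]; field_simp
    exact_mod_cast congrArg Complex.ofReal hr
  set N₂ : Fin k₂ × Fin k₂ → Matrix (Fin k₂) (Fin k₂) ℂ :=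
    fun p => (s : ℂ) • (N p + (t : ℂ) • 1) with hN₂
  set N₁ : Fin k₂ × Fin k₂ → Matrix (Fin k₁) (Fin k₁) ℂ :=
    fun p => (s : ℂ) • (F p + (t : ℂ) • 1) with hN₁
  have hcard : (Finset.univ : Finset (Fin k₂ × Fin k₂)).card = k₂ ^ 2 := by
    simp [pow_two]
  -- generic sum computation
  have hsum₂ : ∑ p, N₂ p = 1 := by
    rw [hN₂, ← Finset.smul_sum, Finset.sum_add_distrib, hNsum, Finset.sum_const, hcard]
    rw [← Nat.cast_smul_eq_nsmul ℂ, smul_smul, smul_add, smul_smul, ← Complex.ofReal_natCast,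
      ← Complex.ofReal_mul]
    rw [← add_smul]
    have hsc : (s : ℂ) + (s : ℂ) * (((k₂ ^ 2 : ℕ) * t : ℝ) : ℂ) = 1 := by
      push_cast at hst ⊢
      linear_combination hst
    rw [hsc, one_smul]
  have hsum₁ : ∑ p, N₁ p = 1 := by
    rw [hN₁, ← Finset.smul_sum, Finset.sum_add_distrib, hFsum, Finset.sum_const, hcard]
    rw [← Nat.cast_smul_eq_nsmul ℂ, smul_smul, smul_add, smul_smul, ← Complex.ofReal_natCast,
      ← Complex.ofReal_mul]
    rw [← add_smul]
    have hsc : (s : ℂ) + (s : ℂ) * (((k₂ ^ 2 : ℕ) * t : ℝ) : ℂ) = 1 := by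
      push_cast at hst ⊢
      linear_combination hst
    rw [hsc, one_smul]
  have hpsd₂ : ∀ p, (N₂ p).PosSemidef := by
    intro p
    refine psd_real_smul (Matrix.PosSemidef.add (hNpsd p) ?_) hspos.le
    exact psd_real_smul Matrix.PosSemidef.one ht0
  have hpsd₁ : ∀ p, (N₁ p).PosSemidef := fun p => psd_real_smul (hFt p) hspos.le
  have hsne : (s : ℂ) ≠ 0 := by simpa using ne_of_gt hspos
  have hli₂ : LinearIndependent ℂ N₂ := by
    rw [Fintype.linearIndependent_iff]
    intro g hg
    set G : ℂ := ∑ p, g p with hG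
    have hcomb : ∑ p : Fin k₂ × Fin k₂, ((s : ℂ) * g p + (s : ℂ) * (t : ℂ) * G) • N p = 0 := by
      rw [← hg, hN₂]
      have expand : ∀ p : Fin k₂ × Fin k₂,
          ((s : ℂ) * g p + (s : ℂ) * (t : ℂ) * G) • N p
          = ((s : ℂ) * g p) • N p + ((s : ℂ) * (t : ℂ) * G) • N p := fun p => add_smul _ _ _
      rw [Finset.sum_congr rfl fun p _ => expand p, Finset.sum_add_distrib]
      have h2 : ∑ p : Fin k₂ × Fin k₂, ((s : ℂ) * (t : ℂ) * G) • N p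
          = ((s : ℂ) * (t : ℂ) * G) • (1 : Matrix (Fin k₂) (Fin k₂) ℂ) := by
        rw [← Finset.smul_sum, hNsum]
      have h3 : ∑ p : Fin k₂ × Fin k₂, g p • (s : ℂ) • (N p + (t : ℂ) • 1)
          = ∑ p : Fin k₂ × Fin k₂, (((s : ℂ) * g p) • N p
              + (g p * (s : ℂ) * (t : ℂ)) • (1 : Matrix (Fin k₂) (Fin k₂) ℂ)) := by
        refine Finset.sum_congr rfl fun p _ => ?_
        module
      rw [h2, h3, Finset.sum_add_distrib]
      congr 1
      rw [← Finset.sum_smul]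
      congr 1
      rw [hG, Finset.mul_sum]
      exact Finset.sum_congr rfl fun p _ => by ring
    have hcoef := Fintype.linearIndependent_iff.mp hNli _ hcomb
    have hGsum : ∑ p : Fin k₂ × Fin k₂, ((s : ℂ) * g p + (s : ℂ) * (t : ℂ) * G) = 0 :=
      Finset.sum_eq_zero fun p _ => hcoef p
    rw [Finset.sum_add_distrib, ← Finset.mul_sum, ← hG, Finset.sum_const, hcard] at hGsum
    have hr : s * (1 + (k₂:ℝ)^2 * t) = 1 := by rw [hs]; field_simp
    have hst' : (s : ℂ) * (1 + (k₂:ℂ)^2 * (t:ℂ)) = 1 := by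
      exact_mod_cast congrArg Complex.ofReal hr
    have hG0 : G = 0 := by
      push_cast at hGsum
      linear_combination hGsum - G * hst'
    intro p
    have := hcoef p
    rw [hG0, mul_zero, add_zero] at this
    exact (mul_eq_zero.mp this).resolve_left hsne
  -- trace identity over pairs
  have htr : ∀ (ρ : Matrix (Fin h) (Fin h) ℂ) (p : Fin k₂ × Fin k₂),
      (Λ₂ ρ * N₂ p).trace = (Λ₁ ρ * N₁ p).trace := by
    intro ρ p
    have hpair : (Λ₁ ρ * F p).trace = (Λ₂ ρ * N p).trace := by
      rw [hF, ← dualMap_pairing Θ (Λ₁ ρ) (N p), ← hcomp]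
    have htrρ : (Λ₂ ρ).trace = (Λ₁ ρ).trace := by rw [hΛ₂T, hΛ₁T]
    rw [hN₂, hN₁]
    rw [Matrix.mul_smul, Matrix.mul_smul, trace_smul, trace_smul, mul_add, mul_add,
      Matrix.mul_smul, Matrix.mul_smul, mul_one, mul_one, trace_add, trace_add,
      trace_smul, trace_smul, hpair, htrρ]
  -- reindex
  have hpow : k₂ ^ 2 = k₂ * k₂ := pow_two k₂
  set e : Fin (k₂ ^ 2) ≃ Fin k₂ × Fin k₂ := (finCongr hpow).trans finProdFinEquiv.symm with he
  refine ⟨N₂ ∘ e, N₁ ∘ e, ⟨fun x => hpsd₂ (e x), ?_⟩, ?_, ⟨fun x => hpsd₁ (e x), ?_⟩, ?_⟩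
  · rw [← hsum₂]; exact Equiv.sum_comp e N₂
  · exact hli₂.comp e e.injective
  · rw [← hsum₁]; exact Equiv.sum_comp e N₁
  · intro ρ x
    exact htr ρ (e x)
end

section
/- Let Λ₁: L(H) → L(K₁) and Λ₂: L(H) → L(K₂) be quantum channels with ker(Λ₁) ⊆ ker(Λ₂). Then there exists a Hermitian-preserving trace-preserving linear map Θ: L(K₁) → L(K₂) such that Λ₂ = Θ ∘ Λ₁. -/
open ComplexOrder Matrix

/-- Every linear map on matrices is determined by its values on standard basis matrices. -/
lemma lm_eq_sum_stdBasis {m n : ℕ}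
    (Φ : Matrix (Fin m) (Fin m) ℂ →ₗ[ℂ] Matrix (Fin n) (Fin n) ℂ)
    (X : Matrix (Fin m) (Fin m) ℂ) :
    Φ X = ∑ i, ∑ j, X i j • Φ (Matrix.single i j 1) := by
  conv_lhs => rw [matrix_eq_sum_single X]
  rw [map_sum]
  refine Finset.sum_congr rfl fun i _ => ?_
  rw [map_sum]
  refine Finset.sum_congr rfl fun j _ => ?_
  rw [← LinearMap.map_smul]
  congr 1
  rw [smul_single, smul_eq_mul, mul_one]

/-- A completely positive map is Hermitian-preserving. -/
lemma cp_hermitianPreserving {m n : ℕ}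
    (Φ : Matrix (Fin m) (Fin m) ℂ →ₗ[ℂ] Matrix (Fin n) (Fin n) ℂ)
    (hΦ : CompletelyPositive Φ) : HermitianPreserving Φ := by
  classical
  have key : ∀ i j : Fin m, Φ (Matrix.single j i 1) = (Φ (Matrix.single i j 1))ᴴ := by
    intro i j
    set v : Fin m × Fin m → ℂ := fun p => if p.1 = p.2 then 1 else 0 with hv
    set A : Matrix (Fin m × Fin m) (Fin m × Fin m) ℂ :=
      Matrix.replicateCol Unit v * (Matrix.replicateCol Unit v)ᴴ with hA
    have hApsd : A.PosSemidef := posSemidef_self_mul_conjTranspose _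
    have hC := hΦ m A hApsd
    have hherm := hC.1
    have hslice : ∀ (a b : Fin m),
        (Matrix.of fun x y => A (x, a) (y, b)) = Matrix.single a b (1 : ℂ) := by
      intro a b
      ext x y
      simp only [Matrix.of_apply, hA, Matrix.mul_apply, Matrix.replicateCol_apply,
        Matrix.conjTranspose_apply, Finset.univ_unique, Finset.sum_singleton, hv,
        Matrix.single]
      by_cases hx : a = x <;> by_cases hy : b = y <;> simp [hx, hy] <;> tauto
    have hentry : ∀ (p q : Fin n) (a b : Fin m),
        Φ (Matrix.single a b (1:ℂ)) p q = star (Φ (Matrix.single b a (1:ℂ)) q p) := by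
      intro p q a b
      have h1 := congrFun (congrFun hherm (q, b)) (p, a)
      simp only [Matrix.conjTranspose_apply, Matrix.of_apply] at h1
      rw [hslice, hslice] at h1
      exact ((congrArg star h1).symm.trans (by rw [star_star])).symm
    ext q p
    rw [Matrix.conjTranspose_apply]
    exact hentry q p j i
  intro X
  rw [lm_eq_sum_stdBasis Φ Xᴴ, lm_eq_sum_stdBasis Φ X]
  rw [Matrix.conjTranspose_sum]
  rw [Finset.sum_comm]
  refine Finset.sum_congr rfl fun j _ => ?_
  rw [Matrix.conjTranspose_sum]
  refine Finset.sum_congr rfl fun i _ => ?_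
  rw [Matrix.conjTranspose_smul, Matrix.conjTranspose_apply, key j i]

/-- if `ker Λ₁ ⊆ ker Λ₂` for quantum channels `Λ₁, Λ₂`, then
`Λ₂ = Θ ∘ Λ₁` for some Hermitian-preserving trace-preserving map `Θ`. -/
theorem kernel_inclusion_implies_HP_postprocessing
    (h k₁ k₂ : ℕ) (hk₂ : 0 < k₂)
    (Λ₁ : Matrix (Fin h) (Fin h) ℂ →ₗ[ℂ] Matrix (Fin k₁) (Fin k₁) ℂ)
    (Λ₂ : Matrix (Fin h) (Fin h) ℂ →ₗ[ℂ] Matrix (Fin k₂) (Fin k₂) ℂ)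
    (hΛ₁ : IsChannel Λ₁) (hΛ₂ : IsChannel Λ₂)
    (hker : LinearMap.ker Λ₁ ≤ LinearMap.ker Λ₂) :
    ∃ Θ : Matrix (Fin k₁) (Fin k₁) ℂ →ₗ[ℂ] Matrix (Fin k₂) (Fin k₂) ℂ,
      HermitianPreserving Θ ∧ TracePreserving Θ ∧ ∀ ρ, Λ₂ ρ = Θ (Λ₁ ρ) := by
  classical
  obtain ⟨hcp1, htp1⟩ := hΛ₁
  obtain ⟨hcp2, htp2⟩ := hΛ₂
  have hhp1 := cp_hermitianPreserving Λ₁ hcp1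
  have hhp2 := cp_hermitianPreserving Λ₂ hcp2
  set V : Submodule ℂ (Matrix (Fin k₁) (Fin k₁) ℂ) := LinearMap.range Λ₁ with hV
  obtain ⟨W, hW⟩ := V.exists_isCompl
  -- the map on the range of Λ₁
  let Θ₁ : V →ₗ[ℂ] Matrix (Fin k₂) (Fin k₂) ℂ :=
    (Submodule.liftQ (LinearMap.ker Λ₁) Λ₂ hker).comp
      (LinearMap.quotKerEquivRange Λ₁).symm.toLinearMap
  have hΘ₁ : ∀ (ρ : Matrix (Fin h) (Fin h) ℂ) (hρ : Λ₁ ρ ∈ V),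
      Θ₁ ⟨Λ₁ ρ, hρ⟩ = Λ₂ ρ := by
    intro ρ hρ
    show (Submodule.liftQ (LinearMap.ker Λ₁) Λ₂ hker)
      ((LinearMap.quotKerEquivRange Λ₁).symm ⟨Λ₁ ρ, hρ⟩) = Λ₂ ρ
    rw [LinearMap.quotKerEquivRange_symm_apply_image Λ₁ ρ hρ]
    rfl
  let Θ₂ : Matrix (Fin k₁) (Fin k₁) ℂ →ₗ[ℂ] Matrix (Fin k₂) (Fin k₂) ℂ :=
    (Matrix.traceLinearMap (Fin k₁) ℂ ℂ).smulRight
      ((k₂ : ℂ)⁻¹ • (1 : Matrix (Fin k₂) (Fin k₂) ℂ))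
  have hk₂' : (k₂ : ℂ) ≠ 0 := Nat.cast_ne_zero.mpr hk₂.ne'
  have hΘ₂tr : ∀ X : Matrix (Fin k₁) (Fin k₁) ℂ, (Θ₂ X).trace = X.trace := by
    intro X
    show (X.trace • ((k₂ : ℂ)⁻¹ • (1 : Matrix (Fin k₂) (Fin k₂) ℂ))).trace = X.trace
    rw [Matrix.trace_smul, Matrix.trace_smul, Matrix.trace_one]
    simp [Fintype.card_fin]
    field_simp
  let projV := V.projectionOnto W hW
  let projW := W.projectionOnto V hW.symm
  let Θ₀ : Matrix (Fin k₁) (Fin k₁) ℂ →ₗ[ℂ] Matrix (Fin k₂) (Fin k₂) ℂ :=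
    Θ₁ ∘ₗ projV + Θ₂ ∘ₗ (W.subtype ∘ₗ projW)
  have hfact : ∀ ρ, Θ₀ (Λ₁ ρ) = Λ₂ ρ := by
    intro ρ
    have hmem : Λ₁ ρ ∈ V := ⟨ρ, rfl⟩
    have h1 : projV (Λ₁ ρ) = ⟨Λ₁ ρ, hmem⟩ :=
      Submodule.projectionOnto_apply_left hW ⟨Λ₁ ρ, hmem⟩
    have h2 : projW (Λ₁ ρ) = 0 :=
      Submodule.projectionOnto_apply_right hW.symm ⟨Λ₁ ρ, hmem⟩
    show Θ₁ (projV (Λ₁ ρ)) + Θ₂ (W.subtype (projW (Λ₁ ρ))) = Λ₂ ρ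
    rw [h1, h2, hΘ₁ ρ hmem]
    simp
  have hΘ₀tr : ∀ X, (Θ₀ X).trace = X.trace := by
    intro X
    have hdec := Submodule.projection_add_projection_eq_self hW X
    obtain ⟨ρ, hρ⟩ := (projV X).2
    have h1 : projV X = ⟨Λ₁ ρ, LinearMap.mem_range_self Λ₁ ρ⟩ := Subtype.ext hρ.symm
    show (Θ₁ (projV X) + Θ₂ (W.subtype (projW X))).trace = X.trace
    rw [Matrix.trace_add, hΘ₂tr, h1, hΘ₁ ρ _]
    have h3 : (Λ₂ ρ).trace = ((projV X : Matrix (Fin k₁) (Fin k₁) ℂ)).trace := by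
      rw [htp2, ← htp1, hρ]
    rw [h3, ← Matrix.trace_add]
    exact congrArg Matrix.trace hdec
  -- symmetrize
  let Θ' : Matrix (Fin k₁) (Fin k₁) ℂ →ₗ[ℂ] Matrix (Fin k₂) (Fin k₂) ℂ :=
    { toFun := fun X => (Θ₀ Xᴴ)ᴴ
      map_add' := by
        intro x y
        rw [Matrix.conjTranspose_add, map_add, Matrix.conjTranspose_add]
      map_smul' := by
        intro c x
        rw [Matrix.conjTranspose_smul, LinearMap.map_smul, Matrix.conjTranspose_smul, star_star]
        rfl }
  refine ⟨(2⁻¹ : ℂ) • (Θ₀ + Θ'), ?_, ?_, ?_⟩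
  · intro X
    show (2⁻¹ : ℂ) • (Θ₀ Xᴴ + (Θ₀ Xᴴᴴ)ᴴ) = ((2⁻¹ : ℂ) • (Θ₀ X + (Θ₀ Xᴴ)ᴴ))ᴴ
    rw [Matrix.conjTranspose_smul, Matrix.conjTranspose_add,
      Matrix.conjTranspose_conjTranspose, Matrix.conjTranspose_conjTranspose]
    rw [add_comm (Θ₀ X)ᴴ (Θ₀ Xᴴ)]
    congr 1
    simp
  · intro X
    show ((2⁻¹ : ℂ) • (Θ₀ X + (Θ₀ Xᴴ)ᴴ)).trace = X.trace
    rw [Matrix.trace_smul, Matrix.trace_add, Matrix.trace_conjTranspose, hΘ₀tr, hΘ₀tr,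
      Matrix.trace_conjTranspose, star_star]
    rw [smul_eq_mul]
    ring
  · intro ρ
    show Λ₂ ρ = (2⁻¹ : ℂ) • (Θ₀ (Λ₁ ρ) + (Θ₀ (Λ₁ ρ)ᴴ)ᴴ)
    rw [← hhp1, hfact, hfact, hhp2, Matrix.conjTranspose_conjTranspose]
    rw [smul_add]
    ext i j
    simp only [Matrix.add_apply, Matrix.smul_apply, smul_eq_mul]
    ring
end
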